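/- arXiv:2106.10931 — 5 statements merged into one kernel-verified Lean document; each statement's English description precedes it below -/
import Mathlib

section
/- If CS is an axiomatically appropriate constant specification for LP (i.e., for every axiom instance φ there is a proof constant c with c:φ ∈ CS), then for every formula φ provable in LP_CS there exists a proof term t such that t:φ is provable in LP_CS. -/
/-- Proof terms of the logic of proofs LP. -/
inductive Tm : Type where
  | var : ℕ → Tm
  | const : ℕ → Tm
  | app : Tm → Tm → Tm
  | sum : Tm → Tm → Tm
  | bang : Tm → Tm

/-- Formulas of LP. -/
inductive Fm : Type where
  | prop : ℕ → Fm
  | bot : Fm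
  | neg : Fm → Fm
  | or : Fm → Fm → Fm
  | box : Tm → Fm → Fm

def Fm.imp (φ ψ : Fm) : Fm := .or (.neg φ) ψ
def Fm.and (φ ψ : Fm) : Fm := .neg (.or (.neg φ) (.neg ψ))
def Fm.iff (φ ψ : Fm) : Fm := (φ.imp ψ).and (ψ.imp φ)
def Fm.top : Fm := .neg .bot

/-- Axioms of LP: the propositional axioms PL1–PL5 plus Appl, Sum, jT, j4. -/
inductive LPAxiom : Fm → Prop where
  | pl1 (φ ψ : Fm) : LPAxiom (φ.imp (.or φ ψ))
  | pl2 (φ ψ : Fm) : LPAxiom ((Fm.or φ ψ).imp (.or ψ φ))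
  | pl3 (φ : Fm) : LPAxiom ((Fm.or φ φ).imp φ)
  | pl4 (φ ψ χ : Fm) : LPAxiom ((φ.imp ψ).imp ((Fm.or χ φ).imp (.or χ ψ)))
  | pl5 (φ : Fm) : LPAxiom (Fm.bot.imp φ)
  | appl (s t : Tm) (φ ψ : Fm) :
      LPAxiom ((Fm.box s (φ.imp ψ)).imp ((Fm.box t φ).imp (.box (.app s t) ψ)))
  | sum (s t : Tm) (φ : Fm) : LPAxiom (((Fm.box s φ).or (.box t φ)).imp (.box (.sum s t) φ))
  | jT (t : Tm) (φ : Fm) : LPAxiom ((Fm.box t φ).imp φ)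
  | j4 (t : Tm) (φ : Fm) : LPAxiom ((Fm.box t φ).imp (.box (.bang t) (.box t φ)))

/-- A constant specification: a set of pairs (c, φ) representing formulas c:φ. -/
abbrev ConstSpec := Set (ℕ × Fm)

/-- CS is a genuine constant specification: it only justifies axiom instances. -/
def ConstSpec.IsCS (CS : ConstSpec) : Prop := ∀ p ∈ CS, LPAxiom p.2

/-- CS is axiomatically appropriate: every axiom instance is justified by some constant. -/
def ConstSpec.AxApp (CS : ConstSpec) : Prop := ∀ φ, LPAxiom φ → ∃ c, (c, φ) ∈ CS

/-- Derivability in LP_CS from a set Γ of hypotheses; the only rule is modus ponens. -/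
inductive Deriv (CS : ConstSpec) (Γ : Set Fm) : Fm → Prop where
  | ax {φ} : LPAxiom φ → Deriv CS Γ φ
  | cs {c φ} : (c, φ) ∈ CS → Deriv CS Γ (.box (.const c) φ)
  | hyp {φ} : φ ∈ Γ → Deriv CS Γ φ
  | mp {φ ψ} : Deriv CS Γ (φ.imp ψ) → Deriv CS Γ φ → Deriv CS Γ ψ

/-- **Internalization.** If CS is an axiomatically appropriate constant specification for LP,
then every theorem of LP_CS is justified by some proof term. -/
theorem internalization (CS : ConstSpec) (hCS : CS.IsCS) (hApp : CS.AxApp)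
    (φ : Fm) (h : Deriv CS ∅ φ) : ∃ t : Tm, Deriv CS ∅ (Fm.box t φ) := by
  induction h with
  | ax hφ =>
    obtain ⟨c, hc⟩ := hApp _ hφ
    exact ⟨.const c, Deriv.cs hc⟩
  | cs hc =>
    exact ⟨.bang (.const _), Deriv.mp (Deriv.ax (LPAxiom.j4 _ _)) (Deriv.cs hc)⟩
  | hyp hφ => exact absurd hφ (Set.notMem_empty _)
  | mp _ _ ih1 ih2 =>
    obtain ⟨s, hs⟩ := ih1
    obtain ⟨t, ht⟩ := ih2
    exact ⟨.app s t, Deriv.mp (Deriv.mp (Deriv.ax (LPAxiom.appl _ _ _ _)) hs) ht⟩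
end

section
/- If CS is an axiomatically appropriate constant specification for LP and ψ₁,…,ψₙ ⊢_{LP_CS} φ, then there is a proof term t(x₁,…,xₙ) such that x₁:ψ₁,…,xₙ:ψₙ ⊢_{LP_CS} t(x₁,…,xₙ):φ. -/
/-- **Lifting.** If CS is an axiomatically appropriate constant specification for LP and
ψ₁,…,ψₙ ⊢ φ in LP_CS, then for distinct proof variables x₁,…,xₙ there is a term t with
x₁:ψ₁,…,xₙ:ψₙ ⊢ t:φ. -/
theorem lifting (CS : ConstSpec) (hCS : CS.IsCS) (hApp : CS.AxApp)
    (n : ℕ) (ψ : Fin n → Fm) (x : Fin n → ℕ) (hx : Function.Injective x)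
    (φ : Fm) (h : Deriv CS (Set.range ψ) φ) :
    ∃ t : Tm, Deriv CS (Set.range fun i => Fm.box (.var (x i)) (ψ i)) (Fm.box t φ) := by
  induction h with
  | ax hφ =>
    obtain ⟨c, hc⟩ := hApp _ hφ
    exact ⟨.const c, Deriv.cs hc⟩
  | @cs c χ hc =>
    exact ⟨.bang (.const c), Deriv.mp (Deriv.ax (LPAxiom.j4 _ _)) (Deriv.cs hc)⟩
  | hyp hφ =>
    obtain ⟨i, rfl⟩ := hφ
    exact ⟨.var (x i), Deriv.hyp ⟨i, rfl⟩⟩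
  | mp _ _ ih1 ih2 =>
    obtain ⟨s, hs⟩ := ih1
    obtain ⟨u, hu⟩ := ih2
    exact ⟨.app s u, Deriv.mp (Deriv.mp (Deriv.ax (LPAxiom.appl _ _ _ _)) hs) hu⟩
end

section
/- HLP_∅ is sound and complete with respect to the class of all HLP_∅ algebras with singleton set of distinguished elements {1}: a formula φ is a theorem of HLP_∅ if and only if under every valuation into every HLP_∅ algebra, the value of φ equals 1. -/
/-- HLP_∅: LP with empty constant specification extended by the justification
regularity rule JReg. -/
inductive HDeriv : Fm → Prop where
  | ax {φ} : LPAxiom φ → HDeriv φ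
  | mp {φ ψ} : HDeriv (φ.imp ψ) → HDeriv φ → HDeriv ψ
  | jreg {φ ψ} (t : Tm) : HDeriv (φ.iff ψ) → HDeriv ((Fm.box t φ).iff (Fm.box t ψ))

/-- Extension of a valuation θ to all formulas, given operators □_t : A → A. -/
def evalBox {A : Type*} [BooleanAlgebra A] (box : Tm → A → A) (θ : ℕ → A) : Fm → A
  | .prop p => θ p
  | .bot => ⊥
  | .neg φ => (evalBox box θ φ)ᶜ
  | .or φ ψ => evalBox box θ φ ⊔ evalBox box θ ψ
  | .box t φ => box t (evalBox box θ φ)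

/-- The conditions for a family of operators □_t : A → A on a Boolean algebra to
form an HLP_∅ algebra. -/
structure IsHLPAlg {A : Type*} [BooleanAlgebra A] (box : Tm → A → A) : Prop where
  appl : ∀ (s t : Tm) (a b : A), box s (a ⇨ b) ⊓ box t a ≤ box (.app s t) b
  sum : ∀ (s t : Tm) (a : A), box s a ⊔ box t a ≤ box (.sum s t) a
  jT : ∀ (t : Tm) (a : A), box t a ≤ a
  j4 : ∀ (t : Tm) (a : A), box t a ≤ box (.bang t) (box t a)

/-- The given Boolean algebra structure and operators on the quotient `Quot r` are
induced by the logical connectives (i.e. the Tarski-Lindenbaum construction is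
well defined) and form an HLP_∅ algebra. -/
def InducedHLP (r : Fm → Fm → Prop) (ba : BooleanAlgebra (Quot r))
    (box : Tm → Quot r → Quot r) : Prop :=
  letI := ba
  IsHLPAlg box ∧
  ((⊥ : Quot r) = Quot.mk r Fm.bot) ∧
  (∀ φ, (Quot.mk r φ)ᶜ = Quot.mk r (Fm.neg φ)) ∧
  (∀ φ ψ, Quot.mk r φ ⊔ Quot.mk r ψ = Quot.mk r (Fm.or φ ψ)) ∧
  (∀ t φ, box t (Quot.mk r φ) = Quot.mk r (Fm.box t φ))

/-- Validity in the class of all HLP_∅ algebras with singleton ∇ = {1}. -/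
def HLPValid (φ : Fm) : Prop :=
  ∀ (A : Type) [BooleanAlgebra A] (box : Tm → A → A),
    IsHLPAlg box → ∀ θ : ℕ → A, evalBox box θ φ = ⊤

/-!
Soundness is an induction on derivations: every LP axiom evaluates to `⊤` in an HLP_∅ algebra,
modus ponens preserves `⊤`, and JReg is sound because `a ⇔ b = ⊤` forces `a = b` and hence
`□_t a = □_t b`.

Completeness goes through the Lindenbaum–Tarski algebra of formulas modulo provable
equivalence. JReg is exactly what makes `□_t` well defined on classes. Every propositional
tautology is derivable (Kalmár's argument: a formula or its negation follows from the signed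
atoms, and the atoms are then eliminated by case analysis), which makes the quotient a Boolean
algebra; the LP axioms make it an HLP_∅ algebra. Under the canonical valuation `p ↦ [p]` every
formula evaluates to its own class, so a valid `φ` has `[φ] = ⊤`, i.e. `⊢ φ`.
-/

section Soundness

variable {A : Type*} [BooleanAlgebra A] {box : Tm → A → A} {θ : ℕ → A}

theorem evalBox_imp (φ ψ : Fm) :
    evalBox box θ (φ.imp ψ) = evalBox box θ φ ⇨ evalBox box θ ψ := by
  rw [himp_eq, sup_comm]
  rfl

theorem evalBox_iff_eq_top {φ ψ : Fm} :
    evalBox box θ (φ.iff ψ) = ⊤ ↔ evalBox box θ φ = evalBox box θ ψ := by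
  simp only [Fm.iff, Fm.and, evalBox, compl_sup, compl_compl, evalBox_imp]
  rw [inf_eq_top_iff, himp_eq_top_iff, himp_eq_top_iff, le_antisymm_iff]

theorem evalBox_eq_top_of_lpAxiom (hbox : IsHLPAlg box) {φ : Fm} (h : LPAxiom φ) :
    evalBox box θ φ = ⊤ := by
  cases h <;> simp only [evalBox_imp, evalBox, himp_eq_top_iff, le_himp_iff]
  case pl1 => exact le_sup_left
  case pl2 => exact (sup_comm _ _).le
  case pl3 => exact (sup_idem _).le
  case pl4 => rw [inf_sup_left]; exact sup_le_sup inf_le_right himp_inf_le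
  case pl5 => exact bot_le
  case appl s t _ _ => exact hbox.appl s t _ _
  case sum s t _ => exact hbox.sum s t _
  case jT t _ => exact hbox.jT t _
  case j4 t _ => exact hbox.j4 t _

end Soundness

theorem HDeriv.hlpValid {φ : Fm} (h : HDeriv φ) : HLPValid φ := by
  intro A _ box hbox θ
  induction h with
  | ax h => exact evalBox_eq_top_of_lpAxiom hbox h
  | mp _ _ ih₁ ih₂ => rwa [evalBox_imp, ih₂, top_himp] at ih₁
  | jreg t _ ih =>
    rw [evalBox_iff_eq_top] at ih ⊢
    exact congrArg (box t) ih

namespace Deriv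

variable {CS : ConstSpec} {Γ : Set Fm} {φ ψ χ : Fm}

theorem imp_trans (h₁ : Deriv CS Γ (φ.imp ψ)) (h₂ : Deriv CS Γ (ψ.imp χ)) :
    Deriv CS Γ (φ.imp χ) :=
  mp (mp (ax (.pl4 ψ χ φ.neg)) h₂) h₁

theorem imp_self : Deriv CS Γ (φ.imp φ) :=
  imp_trans (ax (.pl1 φ φ)) (ax (.pl3 φ))

theorem imp_intro (h : Deriv CS Γ φ) : Deriv CS Γ (ψ.imp φ) :=
  mp (imp_trans (ax (.pl1 φ ψ.neg)) (ax (.pl2 φ ψ.neg))) h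

theorem or_swap (h : Deriv CS Γ (φ.or ψ)) : Deriv CS Γ (ψ.or φ) :=
  mp (ax (.pl2 φ ψ)) h

theorem or_inl : Deriv CS Γ (φ.imp (φ.or ψ)) :=
  ax (.pl1 φ ψ)

theorem or_inr : Deriv CS Γ (ψ.imp (φ.or ψ)) :=
  imp_trans (ax (.pl1 ψ φ)) (ax (.pl2 ψ φ))

theorem or_mono_right (h : Deriv CS Γ (ψ.imp χ)) : Deriv CS Γ ((φ.or ψ).imp (φ.or χ)) :=
  mp (ax (.pl4 ψ χ φ)) h

theorem or_mono_left (h : Deriv CS Γ (φ.imp ψ)) : Deriv CS Γ ((φ.or χ).imp (ψ.or χ)) :=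
  imp_trans (ax (.pl2 φ χ)) (imp_trans (or_mono_right h) (ax (.pl2 χ ψ)))

theorem or_elim (h₁ : Deriv CS Γ (φ.imp χ)) (h₂ : Deriv CS Γ (ψ.imp χ)) :
    Deriv CS Γ ((φ.or ψ).imp χ) :=
  imp_trans (or_mono_left h₁) (imp_trans (or_mono_right h₂) (ax (.pl3 χ)))

theorem or_assoc_mp : Deriv CS Γ (((φ.or ψ).or χ).imp (φ.or (ψ.or χ))) :=
  or_elim (or_elim or_inl (imp_trans (or_inl (ψ := χ)) or_inr))
    (imp_trans (or_inr (φ := ψ)) or_inr)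

theorem or_assoc_mpr : Deriv CS Γ ((φ.or (ψ.or χ)).imp ((φ.or ψ).or χ)) :=
  or_elim (imp_trans (or_inl (ψ := ψ)) or_inl)
    (or_elim (imp_trans (or_inr (φ := φ)) or_inl) or_inr)

theorem imp_comm : Deriv CS Γ ((φ.imp (ψ.imp χ)).imp (ψ.imp (φ.imp χ))) :=
  imp_trans or_assoc_mpr (imp_trans (or_mono_left (ax (.pl2 φ.neg ψ.neg))) or_assoc_mp)

theorem imp_contract : Deriv CS Γ ((φ.imp (φ.imp ψ)).imp (φ.imp ψ)) :=
  imp_trans or_assoc_mpr (or_mono_left (ax (.pl3 φ.neg)))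

theorem imp_mp (h₁ : Deriv CS Γ (φ.imp (ψ.imp χ))) (h₂ : Deriv CS Γ (φ.imp ψ)) :
    Deriv CS Γ (φ.imp χ) := by
  have h₃ : Deriv CS Γ ((φ.imp ψ).imp (φ.imp (φ.imp χ))) :=
    mp imp_comm (mp (or_mono_right (ax (.pl4 ψ χ φ.neg))) h₁)
  exact mp imp_contract (mp h₃ h₂)

theorem deduction (h : Deriv CS (insert φ Γ) ψ) : Deriv CS Γ (φ.imp ψ) := by
  induction h with
  | ax h => exact imp_intro (ax h)
  | cs h => exact imp_intro (cs h)
  | hyp h =>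
    rcases Set.mem_insert_iff.mp h with rfl | h
    · exact imp_self
    · exact imp_intro (hyp h)
  | mp _ _ ih₁ ih₂ => exact imp_mp ih₁ ih₂

theorem em : Deriv CS Γ (φ.or φ.neg) :=
  or_swap (imp_self (φ := φ))

theorem not_not_intro : Deriv CS Γ (φ.imp φ.neg.neg) :=
  or_swap (imp_self (φ := φ.neg))

theorem neg_intro (h : Deriv CS Γ (φ.imp .bot)) : Deriv CS Γ φ.neg :=
  mp (ax (.pl3 φ.neg)) (imp_trans h (ax (.pl5 φ.neg)))

theorem not_bot : Deriv CS Γ Fm.bot.neg :=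
  neg_intro imp_self

theorem neg_or (h₁ : Deriv CS Γ φ.neg) (h₂ : Deriv CS Γ ψ.neg) :
    Deriv CS Γ (φ.or ψ).neg :=
  neg_intro (or_elim (mp (ax (.pl1 φ.neg .bot)) h₁) (mp (ax (.pl1 ψ.neg .bot)) h₂))

theorem by_cases (h₁ : Deriv CS (insert χ Γ) φ) (h₂ : Deriv CS (insert χ.neg Γ) φ) :
    Deriv CS Γ φ :=
  mp (or_elim (deduction h₁) (deduction h₂)) em

end Deriv

theorem HDeriv.of_deriv {φ : Fm} (h : Deriv ∅ ∅ φ) : HDeriv φ := by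
  induction h with
  | ax h => exact .ax h
  | cs h | hyp h => exact absurd h (Set.notMem_empty _)
  | mp _ _ ih₁ ih₂ => exact .mp ih₁ ih₂

inductive PFm (α : Type) : Type where
  | atom : α → PFm α
  | bot : PFm α
  | neg : PFm α → PFm α
  | or : PFm α → PFm α → PFm α

namespace PFm

variable {α : Type}

def imp (p q : PFm α) : PFm α := .or (.neg p) q
def and (p q : PFm α) : PFm α := .neg (.or (.neg p) (.neg q))
def iff (p q : PFm α) : PFm α := (p.imp q).and (q.imp p)

def eval (v : α → Bool) : PFm α → Bool
  | atom a => v a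
  | bot => false
  | neg p => !(p.eval v)
  | or p q => p.eval v || q.eval v

def subst (σ : α → Fm) : PFm α → Fm
  | atom a => σ a
  | bot => .bot
  | neg p => .neg (p.subst σ)
  | or p q => .or (p.subst σ) (q.subst σ)

end PFm

def Fm.signed (φ : Fm) : Bool → Fm
  | true => φ
  | false => φ.neg

section Kalmar

variable {α : Type} {CS : ConstSpec}

def signedAtoms (σ : α → Fm) (v : α → Bool) (s : Finset α) : Set Fm :=
  (fun a => (σ a).signed (v a)) '' s

theorem Deriv.signed_subst [Fintype α] (σ : α → Fm) (v : α → Bool) :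
    ∀ p : PFm α, Deriv CS (signedAtoms σ v .univ) ((p.subst σ).signed (p.eval v))
  | .atom a => hyp ⟨a, Finset.mem_coe.2 (Finset.mem_univ a), rfl⟩
  | .bot => not_bot
  | .neg p => by
    have ih := signed_subst σ v p
    cases hp : p.eval v <;> simp only [hp, Fm.signed, PFm.eval, PFm.subst] at ih ⊢
    · exact ih
    · exact mp not_not_intro ih
  | .or p q => by
    have ihp := signed_subst σ v p
    have ihq := signed_subst σ v q
    cases hp : p.eval v <;> cases hq : q.eval v <;>
      simp only [hp, hq, Fm.signed, PFm.eval, PFm.subst] at ihp ihq ⊢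
    · exact neg_or ihp ihq
    · exact mp or_inr ihq
    · exact mp or_inl ihp
    · exact mp or_inl ihp

theorem signedAtoms_update_insert [DecidableEq α] {σ : α → Fm} {v : α → Bool}
    {s : Finset α} {a : α} (ha : a ∉ s) (b : Bool) :
    signedAtoms σ (Function.update v a b) (insert a s) =
      insert ((σ a).signed b) (signedAtoms σ v s) := by
  rw [signedAtoms, Finset.coe_insert, Set.image_insert_eq, Function.update_self, signedAtoms]
  congr 1
  refine Set.image_congr fun c hc => ?_
  rw [Function.update_of_ne (ne_of_mem_of_not_mem (Finset.mem_coe.1 hc) ha)]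

theorem Deriv.of_forall_signedAtoms [DecidableEq α] (σ : α → Fm) {φ : Fm} (s : Finset α)
    (h : ∀ v, Deriv CS (signedAtoms σ v s) φ) : Deriv CS ∅ φ := by
  induction s using Finset.induction_on with
  | empty => simpa [signedAtoms] using h fun _ => true
  | insert a s ha ih =>
    refine ih fun v => by_cases (χ := σ a) ?_ ?_
    · simpa [signedAtoms_update_insert ha, Fm.signed] using h (Function.update v a true)
    · simpa [signedAtoms_update_insert ha, Fm.signed] using h (Function.update v a false)

theorem HDeriv.subst_of_tautology [Fintype α] [DecidableEq α] (p : PFm α) (σ : α → Fm)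
    (hp : ∀ v, p.eval v = true) : HDeriv (p.subst σ) := by
  refine of_deriv (Deriv.of_forall_signedAtoms σ .univ fun v => ?_)
  simpa [hp v, Fm.signed] using Deriv.signed_subst (CS := ∅) σ v p

end Kalmar

section

open PFm

instance Fm.provEquiv : Setoid Fm where
  r φ ψ := HDeriv (φ.iff ψ)
  iseqv :=
    { refl := fun φ => .subst_of_tautology ((atom 0).iff (atom 0)) ![φ] (by decide)
      symm := fun {φ ψ} =>
        .mp (.subst_of_tautology (((atom 0).iff (atom 1)).imp ((atom 1).iff (atom 0)))
          ![φ, ψ] (by decide))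
      trans := fun {φ ψ χ} h₁ h₂ =>
        .mp (.mp (.subst_of_tautology
          (((atom 0).iff (atom 1)).imp (((atom 1).iff (atom 2)).imp ((atom 0).iff (atom 2))))
          ![φ, ψ, χ] (by decide)) h₁) h₂ }

abbrev Lindenbaum : Type := Quotient Fm.provEquiv

namespace Lindenbaum

instance : Compl Lindenbaum where
  compl := Quotient.map Fm.neg fun φ ψ =>
    .mp (.subst_of_tautology (((atom 0).iff (atom 1)).imp ((atom 0).neg.iff (atom 1).neg))
      ![φ, ψ] (by decide))

instance : Max Lindenbaum where
  max := Quotient.map₂ Fm.or fun φ₁ ψ₁ h₁ φ₂ ψ₂ h₂ =>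
    .mp (.mp (.subst_of_tautology
      (((atom 0).iff (atom 1)).imp (((atom 2).iff (atom 3)).imp
        (((atom 0).or (atom 2)).iff ((atom 1).or (atom 3)))))
      ![φ₁, ψ₁, φ₂, ψ₂] (by decide)) h₁) h₂

instance : Min Lindenbaum where
  min := Quotient.map₂ Fm.and fun φ₁ ψ₁ h₁ φ₂ ψ₂ h₂ =>
    .mp (.mp (.subst_of_tautology
      (((atom 0).iff (atom 1)).imp (((atom 2).iff (atom 3)).imp
        (((atom 0).and (atom 2)).iff ((atom 1).and (atom 3)))))
      ![φ₁, ψ₁, φ₂, ψ₂] (by decide)) h₁) h₂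

def box (t : Tm) : Lindenbaum → Lindenbaum :=
  Quotient.map (.box t) fun _ _ => .jreg t

theorem compl_mk (φ : Fm) : (⟦φ⟧ : Lindenbaum)ᶜ = ⟦φ.neg⟧ := rfl

theorem mk_sup_mk (φ ψ : Fm) : (⟦φ⟧ ⊔ ⟦ψ⟧ : Lindenbaum) = ⟦φ.or ψ⟧ := rfl

theorem box_mk (t : Tm) (φ : Fm) : box t ⟦φ⟧ = ⟦φ.box t⟧ := rfl

theorem mk_eq_mk_of_tautology {n : ℕ} (p q : PFm (Fin n)) (σ : Fin n → Fm)
    (h : ∀ v, (p.iff q).eval v = true) : (⟦p.subst σ⟧ : Lindenbaum) = ⟦q.subst σ⟧ :=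
  Quotient.sound (.subst_of_tautology (p.iff q) σ h)

instance : Lattice Lindenbaum :=
  Lattice.mk'
    (fun a b => Quotient.inductionOn₂ a b fun φ ψ => mk_eq_mk_of_tautology
      ((atom 0).or (atom 1)) ((atom 1).or (atom 0)) ![φ, ψ] (by decide))
    (fun a b c => Quotient.inductionOn₃ a b c fun φ ψ χ => mk_eq_mk_of_tautology
      (((atom 0).or (atom 1)).or (atom 2)) ((atom 0).or ((atom 1).or (atom 2))) ![φ, ψ, χ]
      (by decide))
    (fun a b => Quotient.inductionOn₂ a b fun φ ψ => mk_eq_mk_of_tautology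
      ((atom 0).and (atom 1)) ((atom 1).and (atom 0)) ![φ, ψ] (by decide))
    (fun a b c => Quotient.inductionOn₃ a b c fun φ ψ χ => mk_eq_mk_of_tautology
      (((atom 0).and (atom 1)).and (atom 2)) ((atom 0).and ((atom 1).and (atom 2))) ![φ, ψ, χ]
      (by decide))
    (fun a b => Quotient.inductionOn₂ a b fun φ ψ => mk_eq_mk_of_tautology
      ((atom 0).or ((atom 0).and (atom 1))) (atom 0) ![φ, ψ] (by decide))
    (fun a b => Quotient.inductionOn₂ a b fun φ ψ => mk_eq_mk_of_tautology
      ((atom 0).and ((atom 0).or (atom 1))) (atom 0) ![φ, ψ] (by decide))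

theorem mk_le_mk {φ ψ : Fm} : (⟦φ⟧ : Lindenbaum) ≤ ⟦ψ⟧ ↔ HDeriv (φ.imp ψ) := by
  rw [← sup_eq_right, mk_sup_mk, Quotient.eq]
  constructor
  · exact .mp (.subst_of_tautology ((((atom 0).or (atom 1)).iff (atom 1)).imp
      ((atom 0).imp (atom 1))) ![φ, ψ] (by decide))
  · exact .mp (.subst_of_tautology (((atom 0).imp (atom 1)).imp
      (((atom 0).or (atom 1)).iff (atom 1))) ![φ, ψ] (by decide))

theorem mk_le_mk_of_tautology {n : ℕ} (p q : PFm (Fin n)) (σ : Fin n → Fm)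
    (h : ∀ v, (p.imp q).eval v = true) : (⟦p.subst σ⟧ : Lindenbaum) ≤ ⟦q.subst σ⟧ :=
  mk_le_mk.2 (.subst_of_tautology (p.imp q) σ h)

instance instDistribLattice : DistribLattice Lindenbaum :=
  DistribLattice.ofInfSupLe fun a b c => Quotient.inductionOn₃ a b c fun φ ψ χ =>
    mk_le_mk_of_tautology ((atom 0).and ((atom 1).or (atom 2)))
      (((atom 0).and (atom 1)).or ((atom 0).and (atom 2))) ![φ, ψ, χ] (by decide)

instance : BooleanAlgebra Lindenbaum where
  __ := instDistribLattice
  compl a := aᶜ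
  top := ⟦Fm.top⟧
  bot := ⟦.bot⟧
  inf_compl_le_bot a := Quotient.inductionOn a fun φ =>
    mk_le_mk_of_tautology ((atom 0).and (atom 0).neg) bot ![φ] (by decide)
  top_le_sup_compl a := Quotient.inductionOn a fun φ =>
    mk_le_mk_of_tautology bot.neg ((atom 0).or (atom 0).neg) ![φ] (by decide)
  le_top a := Quotient.inductionOn a fun φ =>
    mk_le_mk_of_tautology (atom 0) bot.neg ![φ] (by decide)
  bot_le a := Quotient.inductionOn a fun φ =>
    mk_le_mk_of_tautology bot (atom 0) ![φ] (by decide)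

theorem mk_himp_mk (φ ψ : Fm) : (⟦φ⟧ ⇨ ⟦ψ⟧ : Lindenbaum) = ⟦φ.imp ψ⟧ := by
  rw [himp_eq, sup_comm, compl_mk, mk_sup_mk]
  rfl

theorem isHLPAlg : IsHLPAlg box where
  appl s t a b := Quotient.inductionOn₂ a b fun φ ψ => by
    rw [mk_himp_mk, ← le_himp_iff, box_mk, box_mk, box_mk, mk_himp_mk]
    exact mk_le_mk.2 (.ax (.appl s t φ ψ))
  sum s t a := Quotient.inductionOn a fun φ => mk_le_mk.2 (.ax (.sum s t φ))
  jT t a := Quotient.inductionOn a fun φ => mk_le_mk.2 (.ax (.jT t φ))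
  j4 t a := Quotient.inductionOn a fun φ => mk_le_mk.2 (.ax (.j4 t φ))

theorem evalBox_mk : ∀ φ : Fm, evalBox box (fun p => ⟦.prop p⟧) φ = ⟦φ⟧
  | .prop _ | .bot => rfl
  | .neg φ => congrArg compl (evalBox_mk φ)
  | .or φ ψ => congrArg₂ max (evalBox_mk φ) (evalBox_mk ψ)
  | .box t φ => congrArg (box t) (evalBox_mk φ)

theorem hDeriv_of_mk_eq_top {φ : Fm} (h : (⟦φ⟧ : Lindenbaum) = ⊤) : HDeriv φ :=
  .mp (.subst_of_tautology (((atom 0).iff bot.neg).imp (atom 0)) ![φ] (by decide))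
    (Quotient.exact h)

end Lindenbaum

end

theorem HDeriv.of_hlpValid {φ : Fm} (h : HLPValid φ) : HDeriv φ := by
  have h_mk := h Lindenbaum Lindenbaum.box Lindenbaum.isHLPAlg fun p => ⟦.prop p⟧
  rw [Lindenbaum.evalBox_mk] at h_mk
  exact Lindenbaum.hDeriv_of_mk_eq_top h_mk

/-- **Soundness and completeness of HLP_∅** with respect to HLP_∅ algebras with
singleton set of distinguished elements {1}. -/
theorem HLP_soundness_completeness : ∀ φ : Fm, HDeriv φ ↔ HLPValid φ :=
  fun _ => ⟨HDeriv.hlpValid, HDeriv.of_hlpValid⟩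
end

section
/- If CS is an axiomatically appropriate constant specification for LP^B, then for every theorem φ of LP^B_CS there exists a term t with ⊢_{LP^B_CS} t:φ, where the case that φ = 1:ψ is obtained by the rule Int is handled by taking t := !1 via axiom j4. -/
/-- Proof terms of LP^B: variables, constants, the Boolean constant 0 and the
operators −, +, · and !. -/
inductive BTm : Type where
  | var : ℕ → BTm
  | const : ℕ → BTm
  | zero : BTm
  | neg : BTm → BTm
  | sum : BTm → BTm → BTm
  | app : BTm → BTm → BTm
  | bang : BTm → BTm

/-- The Boolean unit term 1 := −0. -/
def BTm.one : BTm := .neg .zero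

/-- The Boolean meet of terms s ⊙ t := −(−s + −t). -/
def BTm.prod (s t : BTm) : BTm := .neg (.sum (.neg s) (.neg t))

/-- Formulas of LP^B, including term equations s ≈ t. -/
inductive BFm : Type where
  | prop : ℕ → BFm
  | eq : BTm → BTm → BFm
  | bot : BFm
  | neg : BFm → BFm
  | or : BFm → BFm → BFm
  | box : BTm → BFm → BFm

def BFm.imp (φ ψ : BFm) : BFm := .or (.neg φ) ψ
def BFm.and (φ ψ : BFm) : BFm := .neg (.or (.neg φ) (.neg ψ))
def BFm.iff (φ ψ : BFm) : BFm := (φ.imp ψ).and (ψ.imp φ)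
def BFm.top : BFm := .neg .bot

/-- Substitution of the term s for the term variable x in a term. -/
def BTm.subst (x : ℕ) (s : BTm) : BTm → BTm
  | .var y => if y = x then s else .var y
  | .const c => .const c
  | .zero => .zero
  | .neg t => .neg (BTm.subst x s t)
  | .sum a b => .sum (BTm.subst x s a) (BTm.subst x s b)
  | .app a b => .app (BTm.subst x s a) (BTm.subst x s b)
  | .bang t => .bang (BTm.subst x s t)

/-- Substitution of the term s for the term variable x in a formula. -/
def BFm.subst (x : ℕ) (s : BTm) : BFm → BFm
  | .prop p => .prop p
  | .eq a b => .eq (a.subst x s) (b.subst x s)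
  | .bot => .bot
  | .neg φ => .neg (BFm.subst x s φ)
  | .or φ ψ => .or (BFm.subst x s φ) (BFm.subst x s ψ)
  | .box t φ => .box (t.subst x s) (BFm.subst x s φ)

/-- Axioms of LP^B: the LP axioms, the Boolean algebra axioms B1–B5 for terms and
the equality axioms Eq1, Eq2. -/
inductive BAxiom : BFm → Prop where
  | pl1 (φ ψ : BFm) : BAxiom (φ.imp (.or φ ψ))
  | pl2 (φ ψ : BFm) : BAxiom ((BFm.or φ ψ).imp (.or ψ φ))
  | pl3 (φ : BFm) : BAxiom ((BFm.or φ φ).imp φ)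
  | pl4 (φ ψ χ : BFm) : BAxiom ((φ.imp ψ).imp ((BFm.or χ φ).imp (.or χ ψ)))
  | pl5 (φ : BFm) : BAxiom (BFm.bot.imp φ)
  | appl (s t : BTm) (φ ψ : BFm) :
      BAxiom ((BFm.box s (φ.imp ψ)).imp ((BFm.box t φ).imp (.box (.app s t) ψ)))
  | sum (s t : BTm) (φ : BFm) :
      BAxiom (((BFm.box s φ).or (.box t φ)).imp (.box (.sum s t) φ))
  | jT (t : BTm) (φ : BFm) : BAxiom ((BFm.box t φ).imp φ)
  | j4 (t : BTm) (φ : BFm) : BAxiom ((BFm.box t φ).imp (.box (.bang t) (.box t φ)))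
  | b1a (s t : BTm) : BAxiom (.eq (.sum s t) (.sum t s))
  | b1b (s t : BTm) : BAxiom (.eq (s.prod t) (t.prod s))
  | b2a (s t u : BTm) : BAxiom (.eq (.sum s (.sum t u)) (.sum (.sum s t) u))
  | b2b (s t u : BTm) : BAxiom (.eq (s.prod (t.prod u)) ((s.prod t).prod u))
  | b3a (s : BTm) : BAxiom (.eq (.sum s .zero) s)
  | b3b (s : BTm) : BAxiom (.eq (s.prod .one) s)
  | b4a (s : BTm) : BAxiom (.eq (.sum s (.neg s)) .one)
  | b4b (s : BTm) : BAxiom (.eq (s.prod (.neg s)) .zero)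
  | b5a (s t u : BTm) :
      BAxiom (.eq (.sum s (t.prod u)) ((BTm.sum s t).prod (.sum s u)))
  | b5b (s t u : BTm) :
      BAxiom (.eq (s.prod (.sum t u)) (.sum (s.prod t) (s.prod u)))
  | eq1 (t : BTm) : BAxiom (.eq t t)
  | eq2 (s t : BTm) (x : ℕ) (φ : BFm) :
      BAxiom (((BFm.eq s t).and (φ.subst x s)).imp (φ.subst x t))

/-- A constant specification for LP^B. -/
abbrev BConstSpec := Set (ℕ × BFm)

/-- CS is a genuine constant specification: it only justifies axiom instances. -/
def BConstSpec.IsCS (CS : BConstSpec) : Prop := ∀ p ∈ CS, BAxiom p.2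

/-- CS is axiomatically appropriate. -/
def BConstSpec.AxApp (CS : BConstSpec) : Prop := ∀ φ, BAxiom φ → ∃ c, (c, φ) ∈ CS

/-- Derivability in LP^B_CS; rules: modus ponens and Int (from φ infer 1:φ). -/
inductive BDeriv (CS : BConstSpec) : BFm → Prop where
  | ax {φ} : BAxiom φ → BDeriv CS φ
  | cs {c φ} : (c, φ) ∈ CS → BDeriv CS (.box (.const c) φ)
  | mp {φ ψ} : BDeriv CS (φ.imp ψ) → BDeriv CS φ → BDeriv CS ψ
  | int {φ} : BDeriv CS φ → BDeriv CS (.box BTm.one φ)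

/-- **Internalization for LP^B.** If CS is an axiomatically appropriate constant
specification for LP^B, then every theorem φ of LP^B_CS is justified by some term
(the case where φ = 1:ψ comes from the rule Int being handled by !1 via axiom j4). -/
theorem internalization_LPB (CS : BConstSpec) (hCS : CS.IsCS) (hApp : CS.AxApp)
    (φ : BFm) (h : BDeriv CS φ) : ∃ t : BTm, BDeriv CS (.box t φ) := by
  induction h with
  | ax hax =>
      obtain ⟨c, hc⟩ := hApp _ hax
      exact ⟨.const c, .cs hc⟩
  | cs hc =>
      exact ⟨_, .mp (.ax (.j4 _ _)) (.cs hc)⟩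
  | mp h1 h2 ih1 ih2 =>
      obtain ⟨s, hs⟩ := ih1
      obtain ⟨t, ht⟩ := ih2
      exact ⟨.app s t, .mp (.mp (.ax (.appl s t _ _)) hs) ht⟩
  | int h ih =>
      exact ⟨.bang .one, .mp (.ax (.j4 _ _)) (.int h)⟩
end

section
/- Bi-representation theorem: every full LP^B_CS algebra A over T is bi-isomorphic to a full LP^B_CS set algebra; i.e., there is a pair (f,g) of Boolean isomorphisms, f from A onto a set algebra and g from T onto a set algebra equipped with extensions of · and !, satisfying f(□_α(φ)) = □'_{g(α)}(φ), g(I(c)) = I'(c), g(α·_T β) = g(α)·' g(β), and g(!_T α) = !' g(α). -/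
/-- A term structure: a Boolean algebra of term denotations equipped with the extra
operators · and !. -/
structure TmStruct (T : Type) where
  app : T → T → T
  bang : T → T

/-- The denotation t^v_I of a term, given an interpretation I of constants and an
assignment v of variables (0 denotes ⊥, − the complement and + the join). -/
def denTm {T : Type} [BooleanAlgebra T] (S : TmStruct T) (I : ℕ → T) (v : ℕ → T) :
    BTm → T
  | .var x => v x
  | .const c => I c
  | .zero => ⊥
  | .neg t => (denTm S I v t)ᶜ
  | .sum a b => denTm S I v a ⊔ denTm S I v b
  | .app a b => S.app (denTm S I v a) (denTm S I v b)
  | .bang t => S.bang (denTm S I v t)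

open Classical in
/-- The assignment θ̃_v extending a valuation θ: θ̃_v(t:φ) = □_{t^v_I}(φ), and an
equation s ≈ t gets value 1 or 0 according as s^v_I = t^v_I or not. -/
noncomputable def bevalFm {T A : Type} [BooleanAlgebra T] [BooleanAlgebra A]
    (S : TmStruct T) (I : ℕ → T) (box : T → BFm → A) (θ : ℕ → A) (v : ℕ → T) :
    BFm → A
  | .prop p => θ p
  | .eq s t => if denTm S I v s = denTm S I v t then ⊤ else ⊥
  | .bot => ⊥
  | .neg φ => (bevalFm S I box θ v φ)ᶜ
  | .or φ ψ => bevalFm S I box θ v φ ⊔ bevalFm S I box θ v ψ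
  | .box t φ => box (denTm S I v t) φ

/-- The conditions for (S, I, box) over Boolean algebras T (terms) and A (formulas)
to form a full LP^B_CS algebra: Al-Appl, Al-Sum, Al-1, Al-CS, Al-j4 and Al-jT. -/
structure IsFullLPB (CS : BConstSpec) {T A : Type} [BooleanAlgebra T]
    [BooleanAlgebra A] (S : TmStruct T) (I : ℕ → T) (box : T → BFm → A) : Prop where
  appl : ∀ (α β : T) (φ ψ : BFm), box α (φ.imp ψ) ⊓ box β φ ≤ box (S.app α β) ψ
  sum : ∀ (α β : T) (φ : BFm), box α φ ⊔ box β φ ≤ box (α ⊔ β) φ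
  one : ∀ φ : BFm, BDeriv CS φ → box ⊤ φ = ⊤
  cs : ∀ (c : ℕ) (φ : BFm), (c, φ) ∈ CS → box (I c) φ = ⊤
  j4 : ∀ (α : T) (t : BTm) (φ : BFm), box α φ ≤ box (S.bang α) (.box t φ)
  jT : ∀ (α : T) (φ : BFm) (θ : ℕ → A) (v : ℕ → T), box α φ ≤ bevalFm S I box θ v φ

/-- A field of sets over X: a collection of subsets of X containing ∅ and closed
under complement and union.  Its elements form a set algebra. -/
structure SetField (X : Type) where
  sets : Set (Set X)
  empty_mem : ∅ ∈ sets
  compl_mem : ∀ s ∈ sets, sᶜ ∈ sets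
  union_mem : ∀ s ∈ sets, ∀ t ∈ sets, s ∪ t ∈ sets

/-- The Boolean algebra structure `ba` on the elements of the field of sets F is the
set-theoretic one: order is inclusion, ⊥ is ∅, join is union, complement is
set complement. -/
def IsSetBA {X : Type} (F : SetField X) (ba : BooleanAlgebra F.sets) : Prop :=
  letI := ba
  (((⊥ : F.sets) : Set X) = ∅) ∧
  (∀ a b : F.sets, ((a ⊔ b : F.sets) : Set X) = (a : Set X) ∪ (b : Set X)) ∧
  (∀ a : F.sets, ((aᶜ : F.sets) : Set X) = ((a : Set X))ᶜ) ∧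
  (∀ a b : F.sets, a ≤ b ↔ (a : Set X) ⊆ (b : Set X))

/-- A bi-representation of a full LP^B_CS algebra (T, A, S, I, box) as a full LP^B_CS
set algebra: fields of sets for both the term side and the formula side carrying the
set-theoretic Boolean structure, a transported full LP^B_CS algebra structure on them,
and a pair of Boolean isomorphisms (f, g) commuting with □, I, · and !. -/
structure BiRep (CS : BConstSpec) (T A : Type) [BooleanAlgebra T] [BooleanAlgebra A]
    (S : TmStruct T) (I : ℕ → T) (box : T → BFm → A) where
  X : Type
  Y : Type
  F : SetField X
  G : SetField Y
  baA : BooleanAlgebra F.sets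
  baT : BooleanAlgebra G.sets
  isSetA : IsSetBA F baA
  isSetT : IsSetBA G baT
  S' : TmStruct G.sets
  I' : ℕ → G.sets
  box' : G.sets → BFm → F.sets
  full' : letI := baT; letI := baA; IsFullLPB CS S' I' box'
  f : letI := baA; A ≃o F.sets
  g : letI := baT; T ≃o G.sets
  compat_box : ∀ (α : T) (φ : BFm), f (box α φ) = box' (g α) φ
  compat_I : ∀ c : ℕ, g (I c) = I' c
  compat_app : ∀ α β : T, g (S.app α β) = S'.app (g α) (g β)
  compat_bang : ∀ α : T, g (S.bang α) = S'.bang (g α)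

/-!
Stone's representation: sending an element to the set of prime ideals that do not contain it
is a Boolean embedding into a power set, injective (indeed order-reflecting) by the prime
ideal theorem. Apply it to both the term algebra T and the formula algebra A, and transport
·, !, I and □ along the two Stone isomorphisms. Every defining condition of a full LP^B_CS
algebra is preserved by Boolean isomorphisms; for Al-jT this is because transporting the
operators commutes with evaluating terms and formulas.
-/

section SetAlgebra

variable {X : Type}

def BooleanSubalgebra.toSetField (L : BooleanSubalgebra (Set X)) : SetField X where
  sets := L
  empty_mem := L.bot_mem
  compl_mem _ := L.compl_mem
  union_mem _ hs _ ht := L.sup_mem hs ht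

instance (L : BooleanSubalgebra (Set X)) : BooleanAlgebra L.toSetField.sets :=
  inferInstanceAs (BooleanAlgebra L)

theorem BooleanSubalgebra.isSetBA_toSetField (L : BooleanSubalgebra (Set X)) :
    IsSetBA L.toSetField inferInstance :=
  ⟨rfl, fun _ _ => rfl, fun _ => rfl, fun _ _ => Iff.rfl⟩

variable {α β : Type*} [BooleanAlgebra α] [BooleanAlgebra β]

noncomputable def BoundedLatticeHom.orderIsoRange (e : BoundedLatticeHom α β)
    (he : ∀ a b, e a ≤ e b ↔ a ≤ b) : α ≃o (⊤ : BooleanSubalgebra α).map e :=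
  (OrderEmbedding.ofMapLEIff e he).orderIso.trans
    (OrderIso.setCongr _ _ (by simp))

end SetAlgebra

section Stone

variable (A : Type*) [BooleanAlgebra A]

def stoneHom : BoundedLatticeHom A (Set {J : Order.Ideal A // J.IsPrime}) where
  toFun a := {J | a ∉ J.1}
  map_sup' a b := by
    ext J
    exact Order.Ideal.sup_mem_iff.not.trans not_and_or
  map_inf' a b := by
    ext J
    exact ⟨fun h => ⟨fun ha => h (J.1.lower inf_le_left ha),
      fun hb => h (J.1.lower inf_le_right hb)⟩,
      fun h hab => (J.2.mem_or_mem hab).elim h.1 h.2⟩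
  map_top' := by ext J; simpa using J.2.top_notMem
  map_bot' := by ext J; simp [Order.Ideal.bot_mem]

variable {A}

theorem stoneHom_le_iff (a b : A) : stoneHom A a ≤ stoneHom A b ↔ a ≤ b := by
  refine ⟨fun h => ?_, fun hab J hJ hb => hJ (J.1.lower hab hb)⟩
  by_contra hab
  -- the prime ideal theorem gives a prime ideal containing `b` but not `a`
  have hd : Disjoint (Order.PFilter.principal a : Set A) (Order.Ideal.principal b) :=
    Set.disjoint_left.2 fun x hax hxb =>
      hab ((Order.PFilter.mem_principal.1 hax).trans (Order.Ideal.mem_principal.1 hxb))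
  obtain ⟨J, hJ, hbJ, haJ⟩ := DistribLattice.prime_ideal_of_disjoint_filter_ideal hd
  have ha : (⟨J, hJ⟩ : {J : Order.Ideal A // J.IsPrime}) ∈ stoneHom A a :=
    Set.disjoint_left.1 haJ (Order.PFilter.mem_principal.2 le_rfl)
  exact h ha (hbJ (Order.Ideal.mem_principal.2 le_rfl))

variable (A) in
noncomputable def stoneIso : A ≃o (⊤ : BooleanSubalgebra A).map (stoneHom A) :=
  (stoneHom A).orderIsoRange stoneHom_le_iff

end Stone

section Transport

variable {T T' A A' : Type} [BooleanAlgebra T] [BooleanAlgebra T'] [BooleanAlgebra A]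
  [BooleanAlgebra A']

def TmStruct.transport (S : TmStruct T) (g : T ≃o T') : TmStruct T' where
  app α β := g (S.app (g.symm α) (g.symm β))
  bang α := g (S.bang (g.symm α))

def transportBox (f : A ≃o A') (g : T ≃o T') (box : T → BFm → A) : T' → BFm → A' :=
  fun α φ => f (box (g.symm α) φ)

theorem denTm_transport (g : T ≃o T') (S : TmStruct T) (I v : ℕ → T) (t : BTm) :
    denTm (S.transport g) (g ∘ I) (g ∘ v) t = g (denTm S I v t) := by
  induction t with
  | var x => rfl
  | const c => rfl
  | zero => exact (map_bot g).symm
  | neg t ih => rw [denTm, denTm, ih, map_compl']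
  | sum a b iha ihb => rw [denTm, denTm, iha, ihb, map_sup]
  | app a b iha ihb => rw [denTm, denTm, iha, ihb]; simp [TmStruct.transport]
  | bang t ih => rw [denTm, denTm, ih]; simp [TmStruct.transport]

theorem bevalFm_transport (f : A ≃o A') (g : T ≃o T') (S : TmStruct T) (I : ℕ → T)
    (box : T → BFm → A) (θ : ℕ → A) (v : ℕ → T) (φ : BFm) :
    bevalFm (S.transport g) (g ∘ I) (transportBox f g box) (f ∘ θ) (g ∘ v) φ =
      f (bevalFm S I box θ v φ) := by
  induction φ with
  | prop p => rfl
  | eq s t =>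
    by_cases h : denTm S I v s = denTm S I v t <;> simp [bevalFm, denTm_transport, h]
  | bot => exact (map_bot f).symm
  | neg φ ih => rw [bevalFm, bevalFm, ih, map_compl']
  | or φ ψ ihφ ihψ => rw [bevalFm, bevalFm, ihφ, ihψ, map_sup]
  | box t φ => simp [bevalFm, transportBox, denTm_transport]

theorem IsFullLPB.transport {CS : BConstSpec} {S : TmStruct T} {I : ℕ → T}
    {box : T → BFm → A} (h : IsFullLPB CS S I box) (f : A ≃o A') (g : T ≃o T') :
    IsFullLPB CS (S.transport g) (g ∘ I) (transportBox f g box) where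
  appl α β φ ψ := by
    simpa [transportBox, TmStruct.transport, ← map_inf] using h.appl (g.symm α) (g.symm β) φ ψ
  sum α β φ := by
    simpa [transportBox, ← map_sup] using h.sum (g.symm α) (g.symm β) φ
  one φ hφ := by simp [transportBox, h.one φ hφ]
  cs c φ hc := by simp [transportBox, h.cs c φ hc]
  j4 α t φ := by simpa [transportBox, TmStruct.transport] using h.j4 (g.symm α) t φ
  jT α φ θ v := by
    have key := bevalFm_transport f g S I box (f.symm ∘ θ) (g.symm ∘ v) φ
    have hθ : f ∘ (f.symm ∘ θ) = θ := funext fun _ => f.apply_symm_apply _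
    have hv : g ∘ (g.symm ∘ v) = v := funext fun _ => g.apply_symm_apply _
    rw [hθ, hv] at key
    rw [key]
    exact f.monotone (h.jT _ φ _ _)

end Transport

def BiRep.ofOrderIso {CS : BConstSpec} {T A X Y : Type} [BooleanAlgebra T] [BooleanAlgebra A]
    {S : TmStruct T} {I : ℕ → T} {box : T → BFm → A}
    (L : BooleanSubalgebra (Set X)) (M : BooleanSubalgebra (Set Y))
    (f : A ≃o L.toSetField.sets) (g : T ≃o M.toSetField.sets) (h : IsFullLPB CS S I box) : BiRep CS T A S I box where
  X := X
  Y := Y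
  F := L.toSetField
  G := M.toSetField
  baA := inferInstance
  baT := inferInstance
  isSetA := L.isSetBA_toSetField
  isSetT := M.isSetBA_toSetField
  S' := S.transport g
  I' := g ∘ I
  box' := transportBox f g box
  full' := h.transport f g
  f := f
  g := g
  compat_box α φ := by simp [transportBox]
  compat_I _ := rfl
  compat_app α β := by simp [TmStruct.transport]
  compat_bang α := by simp [TmStruct.transport]

/-- **Bi-representation theorem.** Every full LP^B_CS algebra is bi-isomorphic to a
full LP^B_CS set algebra. -/
theorem LPB_bi_representation (CS : BConstSpec) :
    ∀ (T A : Type) [BooleanAlgebra T] [BooleanAlgebra A]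
      (S : TmStruct T) (I : ℕ → T) (box : T → BFm → A),
      IsFullLPB CS S I box → Nonempty (BiRep CS T A S I box) :=
  fun T A _ _ _ _ _ h => ⟨.ofOrderIso _ _ (stoneIso A) (stoneIso T) h⟩
end
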